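/- arXiv:2001.02874 — 5 statements merged into one kernel-verified Lean document; each statement's English description precedes it below -/
import Mathlib

section
/- Let L and M be groups, let L act on M by group automorphisms (a `MulDistribMulAction L M`), and let ∂ : M →* L satisfy the equivariance condition ∂ (l • m) = l * ∂ m * l⁻¹ and the Peiffer condition (∂ m) • m' = m * m' * m⁻¹ for all l : L and m, m' : M. Then the displacement subgroup [L,M] := Subgroup.closure {x : M | ∃ (l : L) (m : M), x = (l • m) * m⁻¹} is a normal subgroup of M, and it contains every commutator of M: for all m, m' : M one has m * m' * m⁻¹ * m'⁻¹ ∈ [L,M]. In particular the quotient group M ⧸ [L,M] is commutative. -/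
/-!
By the Peiffer identity, conjugation by `m` in `M` is the action of `∂ m`, so a subgroup
stable under the `L`-action is normal, and every commutator
`m m' m⁻¹ m'⁻¹ = (∂ m • m') m'⁻¹` is a displacement. The displacement subgroup is
`L`-stable because `l` maps the generator `l' • m * m⁻¹` to the quotient of the
generators `(l * l') • m * m⁻¹` and `l • m * m⁻¹`.
-/

section Displacement

variable (L M : Type*) [Group L] [Group M] [MulDistribMulAction L M]

def displacementSubgroup : Subgroup M :=
  Subgroup.closure {x : M | ∃ (l : L) (m : M), x = (l • m) * m⁻¹}

variable {L M}

theorem smul_mul_inv_mem_displacementSubgroup (l : L) (m : M) :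
    l • m * m⁻¹ ∈ displacementSubgroup L M :=
  Subgroup.subset_closure ⟨l, m, rfl⟩

theorem smul_mem_displacementSubgroup (l : L) {x : M} (hx : x ∈ displacementSubgroup L M) :
    l • x ∈ displacementSubgroup L M := by
  induction hx using Subgroup.closure_induction with
  | mem y hy =>
    obtain ⟨l', m, rfl⟩ := hy
    have hsplit :
        l • (l' • m * m⁻¹) = ((l * l') • m * m⁻¹) * (l • m * m⁻¹)⁻¹ := by
      rw [smul_mul', smul_smul, smul_inv']
      group
    rw [hsplit]
    exact mul_mem (smul_mul_inv_mem_displacementSubgroup _ _)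
      (inv_mem (smul_mul_inv_mem_displacementSubgroup _ _))
  | one => rw [smul_one]; exact one_mem _
  | mul a b _ _ ha hb => rw [smul_mul']; exact mul_mem ha hb
  | inv a _ ha => rw [smul_inv']; exact inv_mem ha

theorem displacementSubgroup_normal (d : M →* L)
    (hpeiffer : ∀ m m' : M, d m • m' = m * m' * m⁻¹) :
    (displacementSubgroup L M).Normal where
  conj_mem x hx n := hpeiffer n x ▸ smul_mem_displacementSubgroup (d n) hx

theorem commutator_mem_displacementSubgroup (d : M →* L)
    (hpeiffer : ∀ m m' : M, d m • m' = m * m' * m⁻¹) (m m' : M) :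
    m * m' * m⁻¹ * m'⁻¹ ∈ displacementSubgroup L M :=
  hpeiffer m m' ▸ smul_mul_inv_mem_displacementSubgroup (d m) m'

end Displacement

theorem QuotientGroup.mk_mul_comm_of_commutator_mem {M : Type*} [Group M] {N : Subgroup M}
    (hN : ∀ m m' : M, m * m' * m⁻¹ * m'⁻¹ ∈ N) (a b : M) :
    (QuotientGroup.mk (a * b) : M ⧸ N) = QuotientGroup.mk (b * a) := by
  rw [QuotientGroup.eq]
  convert hN b⁻¹ a⁻¹ using 1
  group

theorem displacement_subgroup_normal_and_contains_commutators_general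
    {L M : Type*} [Group L] [Group M] [MulDistribMulAction L M]
    (d : M →* L)
    (hpeiffer : ∀ (m m' : M), (d m) • m' = m * m' * m⁻¹) :
    (Subgroup.closure {x : M | ∃ (l : L) (m : M), x = (l • m) * m⁻¹}).Normal ∧
    (∀ m m' : M,
      m * m' * m⁻¹ * m'⁻¹ ∈
        Subgroup.closure {x : M | ∃ (l : L) (m : M), x = (l • m) * m⁻¹}) ∧
    (∀ a b : M,
      (QuotientGroup.mk (a * b) :
          M ⧸ Subgroup.closure {x : M | ∃ (l : L) (m : M), x = (l • m) * m⁻¹}) =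
        QuotientGroup.mk (b * a)) :=
  have hcomm := commutator_mem_displacementSubgroup d hpeiffer
  ⟨displacementSubgroup_normal d hpeiffer, hcomm,
    QuotientGroup.mk_mul_comm_of_commutator_mem hcomm⟩

/-- For a crossed module of groups `d : M →* L`, the displacement
subgroup `[L,M]` is normal in `M`, contains all commutators of `M`, and hence
the quotient `M ⧸ [L,M]` is commutative. -/
theorem displacement_subgroup_normal_and_contains_commutators
    {L M : Type*} [Group L] [Group M] [MulDistribMulAction L M]
    (d : M →* L)
    (hequiv : ∀ (l : L) (m : M), d (l • m) = l * d m * l⁻¹)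
    (hpeiffer : ∀ (m m' : M), (d m) • m' = m * m' * m⁻¹) :
    (Subgroup.closure {x : M | ∃ (l : L) (m : M), x = (l • m) * m⁻¹}).Normal ∧
    (∀ m m' : M,
      m * m' * m⁻¹ * m'⁻¹ ∈
        Subgroup.closure {x : M | ∃ (l : L) (m : M), x = (l • m) * m⁻¹}) ∧
    (∀ a b : M,
      (QuotientGroup.mk (a * b) :
          M ⧸ Subgroup.closure {x : M | ∃ (l : L) (m : M), x = (l • m) * m⁻¹}) =
        QuotientGroup.mk (b * a)) :=
  displacement_subgroup_normal_and_contains_commutators_general d hpeiffer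
end

section
/- Let (∂ : M →* L) and (∂' : M' →* L) be crossed modules of groups over the same group L, and let f : M →* M' be a surjective morphism of L-crossed modules, i.e. ∂' (f m) = ∂ m and f (l • m) = l • f m for all l : L, m : M. Then MonoidHom.ker f ≤ Subgroup.center M; that is, f regarded as a group homomorphism is a central extension of groups. -/
theorem MonoidHom.ker_le_center_of_peiffer {L M : Type*} [Monoid L] [Group M] [MulAction L M]
    (d : M →* L) (hpeiffer : ∀ m m' : M, d m • m' = m * m' * m⁻¹) :
    d.ker ≤ Subgroup.center M := by
  intro k hk
  rw [Subgroup.mem_center_iff]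
  intro m
  have hconj : m = k * m * k⁻¹ := by
    rw [← hpeiffer k m, MonoidHom.mem_ker.mp hk, one_smul]
  exact eq_mul_inv_iff_mul_eq.mp hconj

theorem ker_of_surjective_xmod_morphism_le_center_general
    {L M M' : Type*} [Group L] [Group M] [Group M']
    [MulDistribMulAction L M]
    (d : M →* L) (d' : M' →* L)
    (hpeiffer : ∀ (m m' : M), (d m) • m' = m * m' * m⁻¹)
    (f : M →* M')
    (hfd : ∀ m : M, d' (f m) = d m) :
    MonoidHom.ker f ≤ Subgroup.center M := by
  have hd : d'.comp f = d := MonoidHom.ext hfd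
  calc f.ker ≤ (d'.comp f).ker := f.ker_le_comap d'.ker
    _ = d.ker := by rw [hd]
    _ ≤ Subgroup.center M := d.ker_le_center_of_peiffer hpeiffer

/-- A surjective morphism of `L`-crossed modules of groups is a
central extension of groups: its kernel is contained in the center of the
domain. -/
theorem ker_of_surjective_xmod_morphism_le_center
    {L M M' : Type*} [Group L] [Group M] [Group M']
    [MulDistribMulAction L M] [MulDistribMulAction L M']
    (d : M →* L) (d' : M' →* L)
    (hequiv : ∀ (l : L) (m : M), d (l • m) = l * d m * l⁻¹)
    (hpeiffer : ∀ (m m' : M), (d m) • m' = m * m' * m⁻¹)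
    (hequiv' : ∀ (l : L) (m : M'), d' (l • m) = l * d' m * l⁻¹)
    (hpeiffer' : ∀ (m m' : M'), (d' m) • m' = m * m' * m⁻¹)
    (f : M →* M') (hfsurj : Function.Surjective f)
    (hfd : ∀ m : M, d' (f m) = d m)
    (hfequiv : ∀ (l : L) (m : M), f (l • m) = l • f m) :
    MonoidHom.ker f ≤ Subgroup.center M :=
  ker_of_surjective_xmod_morphism_le_center_general d d' hpeiffer f hfd
end

section
/- Let C₁ and C₀ be groups and let d, c : C₁ →* C₀ and e : C₀ →* C₁ be group homomorphisms with d ∘ e = id and c ∘ e = id (a reflexive graph of groups). Then the normal closure in C₀ of the set {y : C₀ | ∃ x : C₁, y = d x * (c x)⁻¹} equals the normal closure of the image under c of the kernel of d: Subgroup.normalClosure {y | ∃ x, y = d x * (c x)⁻¹} = Subgroup.normalClosure ↑(Subgroup.map c (MonoidHom.ker d)). Equivalently, the coequalizer of d and c is the cokernel of the restriction of c to ker d. -/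
/-! Given the section `e`, the sets `{d x * (c x)⁻¹}` and `c (ker d)` already coincide before taking
normal closures: `d x * (c x)⁻¹ = c (e (d x) * x⁻¹)` with `e (d x) * x⁻¹ ∈ ker d`, and conversely
`c k = d k⁻¹ * (c k⁻¹)⁻¹` for `k ∈ ker d`. -/

namespace MonoidHom

variable {G H : Type*} [Group G] [Group H]

theorem map_ker_subset_setOf_mul_inv (d c : G →* H) :
    (Subgroup.map c d.ker : Set H) ⊆ {y | ∃ x, y = d x * (c x)⁻¹} := by
  rintro _ ⟨k, hk, rfl⟩
  exact ⟨k⁻¹, by simp [mem_ker.mp hk]⟩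

theorem setOf_mul_inv_subset_map_ker (d c : G →* H) (e : H →* G)
    (hde : ∀ y, d (e y) = y) (hce : ∀ y, c (e y) = y) :
    {y | ∃ x, y = d x * (c x)⁻¹} ⊆ (Subgroup.map c d.ker : Set H) := by
  rintro _ ⟨x, rfl⟩
  exact ⟨e (d x) * x⁻¹, by simp [hde], by simp [hce]⟩

theorem setOf_mul_inv_eq_map_ker (d c : G →* H) (e : H →* G)
    (hde : ∀ y, d (e y) = y) (hce : ∀ y, c (e y) = y) :
    {y | ∃ x, y = d x * (c x)⁻¹} = (Subgroup.map c d.ker : Set H) :=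
  (setOf_mul_inv_subset_map_ker d c e hde hce).antisymm (map_ker_subset_setOf_mul_inv d c)

end MonoidHom

/-- For a reflexive graph of groups `d, c : C₁ →* C₀` with common
section `e`, the coequaliser of `d` and `c` coincides with the cokernel of the
restriction of `c` to `ker d`: the corresponding normal closures in `C₀` agree. -/
theorem coequalizer_eq_cokernel_of_reflexive_graph
    {C₁ C₀ : Type*} [Group C₁] [Group C₀]
    (d c : C₁ →* C₀) (e : C₀ →* C₁)
    (hde : ∀ x : C₀, d (e x) = x) (hce : ∀ x : C₀, c (e x) = x) :
    Subgroup.normalClosure {y : C₀ | ∃ x : C₁, y = d x * (c x)⁻¹}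
      = Subgroup.normalClosure ↑(Subgroup.map c (MonoidHom.ker d)) := by
  rw [MonoidHom.setOf_mul_inv_eq_map_ker d c e hde hce]
end

section
/- Let A, A', B, B' be groups, and let f : A →* B, f' : A' →* B', α : A →* A', β : B →* B' be surjective group homomorphisms with f' ∘ α = β ∘ f. Then the induced map between kernels is surjective if and only if the square is a regular pushout; explicitly: (∀ a' ∈ MonoidHom.ker f', ∃ a ∈ MonoidHom.ker f, α a = a') ↔ (∀ (a' : A') (b : B), f' a' = β b → ∃ a : A, α a = a' ∧ f a = b). -/
section KernelSquare

variable {A A' B B' : Type*} [Group A] [Group A'] [Group B] [Group B']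
  {f : A →* B} {f' : A' →* B'} {α : A →* A'} {β : B →* B'}

theorem exists_lift_of_ker_map_surjective (hf : Function.Surjective f)
    (hcomm : ∀ a : A, f' (α a) = β (f a))
    (hker : ∀ a' ∈ MonoidHom.ker f', ∃ a ∈ MonoidHom.ker f, α a = a')
    {a' : A'} {b : B} (hab : f' a' = β b) : ∃ a : A, α a = a' ∧ f a = b := by
  obtain ⟨a₀, rfl⟩ := hf b
  have hdefect : a' * (α a₀)⁻¹ ∈ MonoidHom.ker f' := by
    rw [MonoidHom.mem_ker, map_mul, map_inv, hab, hcomm, mul_inv_cancel]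
  obtain ⟨k, hk, hαk⟩ := hker _ hdefect
  refine ⟨k * a₀, ?_, ?_⟩
  · rw [map_mul, hαk, inv_mul_cancel_right]
  · rw [map_mul, MonoidHom.mem_ker.mp hk, one_mul]

theorem exists_mem_ker_of_lift
    (hlift : ∀ (a' : A') (b : B), f' a' = β b → ∃ a : A, α a = a' ∧ f a = b)
    {a' : A'} (ha' : a' ∈ MonoidHom.ker f') : ∃ a ∈ MonoidHom.ker f, α a = a' := by
  obtain ⟨a, hαa, hfa⟩ := hlift a' 1 (by rw [MonoidHom.mem_ker.mp ha', map_one])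
  exact ⟨a, MonoidHom.mem_ker.mpr hfa, hαa⟩

end KernelSquare

theorem ker_map_surjective_iff_regular_pushout_general
    {A A' B B' : Type*} [Group A] [Group A'] [Group B] [Group B']
    (f : A →* B) (f' : A' →* B') (α : A →* A') (β : B →* B')
    (hf : Function.Surjective f)
    (hcomm : ∀ a : A, f' (α a) = β (f a)) :
    (∀ a' ∈ MonoidHom.ker f', ∃ a ∈ MonoidHom.ker f, α a = a') ↔
    (∀ (a' : A') (b : B), f' a' = β b → ∃ a : A, α a = a' ∧ f a = b) :=
  ⟨fun hker _ _ hab => exists_lift_of_ker_map_surjective hf hcomm hker hab,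
    fun hlift _ ha' => exists_mem_ker_of_lift hlift ha'⟩

/-- In a commutative square of surjective group homomorphisms, the
induced map between the kernels is surjective if and only if the square is a
regular pushout (the comparison to the pullback is surjective). -/
theorem ker_map_surjective_iff_regular_pushout
    {A A' B B' : Type*} [Group A] [Group A'] [Group B] [Group B']
    (f : A →* B) (f' : A' →* B') (α : A →* A') (β : B →* B')
    (hf : Function.Surjective f) (hf' : Function.Surjective f')
    (hα : Function.Surjective α) (hβ : Function.Surjective β)
    (hcomm : ∀ a : A, f' (α a) = β (f a)) :
    (∀ a' ∈ MonoidHom.ker f', ∃ a ∈ MonoidHom.ker f, α a = a') ↔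
    (∀ (a' : A') (b : B), f' a' = β b → ∃ a : A, α a = a' ∧ f a = b) :=
  ker_map_surjective_iff_regular_pushout_general f f' α β hf hcomm
end

section
/- Let X and L be groups, p : X →* L a group homomorphism and s : L →* X a section of p (p ∘ s = id). Then the comparison map x ↦ (QuotientGroup.mk x, p x) from X to (X ⧸ Subgroup.normalClosure (Set.range s)) × L is surjective. -/
theorem QuotientGroup.mk_prod_surjective_of_map_eq_top {X L : Type*} [Group X] [Group L]
    (p : X →* L) {N : Subgroup X} (hN : N.map p = ⊤) :
    Function.Surjective (fun x : X => ((x : X ⧸ N), p x)) := by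
  rintro ⟨q, l⟩
  induction q using QuotientGroup.induction_on with
  | H x =>
    obtain ⟨n, hn, hpn⟩ : (p x)⁻¹ * l ∈ N.map p := hN ▸ Subgroup.mem_top _
    refine ⟨x * n, Prod.ext (QuotientGroup.mk_mul_of_mem x hn) ?_⟩
    simp only [map_mul, hpn, mul_inv_cancel_left]

/-- For a split extension of groups `p : X →* L`, `s : L →* X`,
the comparison map `x ↦ (x mod normalClosure (range s), p x)` from `X` to
`(X ⧸ normalClosure (range s)) × L` is surjective. -/
theorem comparison_to_coinvariants_prod_surjective
    {X L : Type*} [Group X] [Group L]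
    (p : X →* L) (s : L →* X) (hsec : ∀ l : L, p (s l) = l) :
    Function.Surjective
      (fun x : X =>
        ((QuotientGroup.mk x : X ⧸ Subgroup.normalClosure (Set.range s)), p x)) :=
  QuotientGroup.mk_prod_surjective_of_map_eq_top p <| eq_top_iff.2 fun l _ =>
    ⟨s l, Subgroup.subset_normalClosure ⟨l, rfl⟩, hsec l⟩
end
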